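/- arXiv:2001.01552 — 2 statements merged into one kernel-verified Lean document; each statement's English description precedes it below -/
import Mathlib

section
/- Let S be a set of convex shapes in ℝ^d, let m be a positive integer, and let k = 2 d^{5/2} m. If there exist two ≤_k-incomparable shapes B₁, B₂ ∈ S, then the complete bipartite graph K_{m,m} has a 2-thin S-shaped intersection representation in ℝ^d. -/
open MeasureTheory Set Pointwise Metric Function
open scoped RealInnerProductSpace ENNReal

noncomputable section

/-- `ℝ^d` as a Euclidean space. -/
abbrev Euc (d : ℕ) := EuclideanSpace ℝ (Fin d)

/-- A shape: a compact set that is non-degenerate, i.e. not contained in a proper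
affine subspace. -/
def IsShape {d : ℕ} (B : Set (Euc d)) : Prop :=
  IsCompact B ∧ affineSpan ℝ B = ⊤

/-- `B₁ ⊑ₛ B₂`: for every `x ∈ B₂` there is a translate `B₁'` of `B₁` with `x ∈ B₁'`
and `vol (B₁' ∩ B₂) ≥ vol B₁ / s`. -/
def SqIn {d : ℕ} (s : ℝ) (B₁ B₂ : Set (Euc d)) : Prop :=
  ∀ x ∈ B₂, ∃ v : Euc d, x ∈ v +ᵥ B₁ ∧
    volume B₁ / ENNReal.ofReal s ≤ volume ((v +ᵥ B₁) ∩ B₂)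

/-- `B₁` and `B₂` are `⊑ₛ`-comparable. -/
def SqComparable {d : ℕ} (s : ℝ) (B₁ B₂ : Set (Euc d)) : Prop :=
  SqIn s B₁ B₂ ∨ SqIn s B₂ B₁

/-- `B₁ ≤ₖ B₂`: some translate of `B₁` is contained in `k • B₂`. -/
def LeK {d : ℕ} (k : ℝ) (B₁ B₂ : Set (Euc d)) : Prop :=
  ∃ v : Euc d, v +ᵥ B₁ ⊆ k • B₂

/-- `B₁ ≤_{k,s} B₂`: for every `x ∈ k • B₂` there are a translate `B₁'` of `B₁` and a
translate `B₁''` of `s • B₁` with `x ∈ B₁''` and `B₁' ⊆ B₁'' ∩ k • B₂`. -/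
def LeKS {d : ℕ} (k s : ℝ) (B₁ B₂ : Set (Euc d)) : Prop :=
  ∀ x ∈ k • B₂, ∃ v w : Euc d,
    x ∈ w +ᵥ (s • B₁) ∧ v +ᵥ B₁ ⊆ (w +ᵥ (s • B₁)) ∩ (k • B₂)

/-- An intersection representation of a graph in `ℝ^d`. -/
def IsIntersectionRep {V : Type*} {d : ℕ} (G : SimpleGraph V) (φ : V → Set (Euc d)) : Prop :=
  (∀ v, (φ v).Nonempty) ∧ ∀ u v : V, u ≠ v → ((φ u ∩ φ v).Nonempty ↔ G.Adj u v)

/-- A representation is `c`-thin if every point lies in at most `c` of the sets. -/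
def IsThin {V : Type*} {d : ℕ} (c : ℝ) (φ : V → Set (Euc d)) : Prop :=
  ∀ x : Euc d, ({v : V | x ∈ φ v}.ncard : ℝ) ≤ c

/-- A `(c,⊑ₛ)`-tame representation. -/
def IsTame {V : Type*} {d : ℕ} (c s : ℝ) (G : SimpleGraph V) (φ : V → Set (Euc d)) : Prop :=
  IsIntersectionRep G φ ∧ IsThin c φ ∧
    (∀ v, Convex ℝ (φ v) ∧ IsShape (φ v)) ∧
    ∀ u v : V, SqComparable s (φ u) (φ v)

/-- An `S`-shaped representation: each vertex is assigned a translate of a shape in `S`. -/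
def IsSShaped {V : Type*} {d : ℕ} (S : Set (Set (Euc d))) (φ : V → Set (Euc d)) : Prop :=
  ∀ v, ∃ B ∈ S, ∃ t : Euc d, φ v = t +ᵥ B

/-- `X` is a balanced separator: every component of `G - X` has at most `(2/3)|V(G)|`
vertices. -/
def IsBalancedSeparator {V : Type*} [Fintype V] (G : SimpleGraph V) (X : Set V) : Prop :=
  ∀ C : (G.induce Xᶜ).ConnectedComponent,
    (C.supp.ncard : ℝ) ≤ 2 / 3 * Fintype.card V

/-- `L_{G,≺,r}(v)`, where the linear ordering `≺` is encoded by an injective `ρ : V → ℕ`: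
the set of vertices `x ⪯ v` reachable from `v` by a path of length at most `r` all of whose
internal vertices are `≻ v`. -/
def Lset {V : Type*} (G : SimpleGraph V) (ρ : V → ℕ) (r : ℕ) (v : V) : Set V :=
  {x | ρ x ≤ ρ v ∧ ∃ p : G.Walk v x, p.IsPath ∧ p.length ≤ r ∧
    ∀ z ∈ p.support, z ≠ v → z ≠ x → ρ v < ρ z}

/-- The height of a set: the least `h ≥ 0` such that the set lies between two parallel
hyperplanes at distance `h`. -/
def heightOf {d : ℕ} (B : Set (Euc d)) : ℝ :=
  sInf {h : ℝ | 0 ≤ h ∧ ∃ u : Euc d, ‖u‖ = 1 ∧ ∃ a : ℝ,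
    ∀ x ∈ B, a ≤ (inner ℝ u x : ℝ) ∧ (inner ℝ u x : ℝ) ≤ a + h}

/-- A parallelepiped with center `p` and sides `v₁, …, v_d`. -/
def IsParallelepiped {d : ℕ} (T : Set (Euc d)) : Prop :=
  ∃ (p : Euc d) (v : Fin d → Euc d), LinearIndependent ℝ v ∧
    T = {x | ∃ α : Fin d → ℝ, (∀ i, α i ∈ Set.Icc (-1 : ℝ) 1) ∧ x = p + ∑ i, α i • v i}

/-- `T` is an envelope of `B`: a parallelepiped of smallest volume containing `B`. -/
def IsEnvelope {d : ℕ} (T B : Set (Euc d)) : Prop :=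
  IsParallelepiped T ∧ B ⊆ T ∧
    ∀ T' : Set (Euc d), IsParallelepiped T' → B ⊆ T' → volume T ≤ volume T'

/-- A box in `ℝ^d`: a product of `d` closed intervals. -/
def IsBox {d : ℕ} (B : Set (Euc d)) : Prop :=
  ∃ a b : Fin d → ℝ, B = {x : Euc d | ∀ i, x i ∈ Set.Icc (a i) (b i)}

/-- `Q` is `k'`-fat: every ball `B` centered in `Q` satisfies
`vol (B ∩ Q) ≥ min (vol B / k') (vol Q)`. -/
def IsFat {d : ℕ} (k' : ℝ) (Q : Set (Euc d)) : Prop :=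
  ∀ x ∈ Q, ∀ ρ : ℝ, 0 < ρ →
    min (volume (Metric.closedBall x ρ) / ENNReal.ofReal k') (volume Q)
      ≤ volume (Metric.closedBall x ρ ∩ Q)

/-- The strong product of two simple graphs. -/
def strongProd {α β : Type*} (G : SimpleGraph α) (H : SimpleGraph β) :
    SimpleGraph (α × β) where
  Adj x y := x ≠ y ∧ (x.1 = y.1 ∨ G.Adj x.1 y.1) ∧ (x.2 = y.2 ∨ H.Adj x.2 y.2)
  symm := by
    refine ⟨?_⟩
    rintro ⟨a1, a2⟩ ⟨b1, b2⟩ ⟨hne, h1, h2⟩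
    refine ⟨hne.symm, ?_, ?_⟩
    · rcases h1 with h | h
      · exact Or.inl h.symm
      · exact Or.inr h.symm
    · rcases h2 with h | h
      · exact Or.inl h.symm
      · exact Or.inr h.symm
  loopless := by
    refine ⟨?_⟩
    rintro ⟨a1, a2⟩ ⟨hne, -, -⟩
    exact hne rfl

/-- The graph `G⁺(N, l)`: add hubs `v₁, …, v_N` and internally disjoint paths of length `l`
from each hub to each vertex of `G`.  The internal vertices of the path from hub `i` to
vertex `u` are `(i, u, 0), …, (i, u, l-2)`. -/
def plusGraph {V : Type*} (G : SimpleGraph V) (N l : ℕ) :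
    SimpleGraph (V ⊕ (Fin N ⊕ Fin N × V × Fin (l - 1))) :=
  SimpleGraph.fromRel (fun x y =>
    match x, y with
    | Sum.inl u, Sum.inl w => G.Adj u w
    | Sum.inr (Sum.inl _), Sum.inl _ => l = 1
    | Sum.inr (Sum.inl i), Sum.inr (Sum.inr (j, _, t)) => i = j ∧ (t : ℕ) = 0
    | Sum.inr (Sum.inr (i, u, t)), Sum.inr (Sum.inr (j, w, t')) =>
        i = j ∧ u = w ∧ (t' : ℕ) = (t : ℕ) + 1
    | Sum.inr (Sum.inr (_, u, t)), Sum.inl w => u = w ∧ (t : ℕ) = l - 2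
    | _, _ => False)

/-- `γ_d`: the supremum over affine hyperplanes `H` of the `(d-1)`-dimensional Hausdorff
measure of the intersection of `H` with the unit cube. -/
def gammaConst (d : ℕ) : ℝ :=
  sSup {γ : ℝ | ∃ (u : Euc d) (a : ℝ), ‖u‖ = 1 ∧
    γ = (MeasureTheory.Measure.hausdorffMeasure ((d : ℝ) - 1)
      ({x : Euc d | (inner ℝ u x : ℝ) = a} ∩ {x : Euc d | ∀ i, x i ∈ Set.Icc (0 : ℝ) 1})).toReal}

/-- The sequence `ℓ_h`: `ℓ_1 = 1` and `ℓ_{h+1} = ℓ_h / (2(h+1))`. -/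
def ellSeq : ℕ → ℝ
  | 0 => 2
  | n + 1 => ellSeq n / (2 * (n + 1))

/-- The trapezoid `T_h` with vertices `(0,0)`, `(ℓ_h,0)`, `(ℓ_h, hℓ_h)`, `(0, 2hℓ_h)`. -/
def trapezoidShape (h : ℕ) : Set (Euc 2) :=
  convexHull ℝ {(!₂[0, 0] : Euc 2), !₂[ellSeq h, 0], !₂[ellSeq h, h * ellSeq h],
    !₂[0, 2 * h * ellSeq h]}

/-- An axis-aligned square `S_h` with sides of length `ℓ_h`. -/
def squareShape (h : ℕ) : Set (Euc 2) :=
  {x : Euc 2 | x 0 ∈ Set.Icc 0 (ellSeq h) ∧ x 1 ∈ Set.Icc 0 (ellSeq h)}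

/-- The set `S*` of shapes. -/
def SStar : Set (Set (Euc 2)) :=
  {B | ∃ h : ℕ, 0 < h ∧ (B = trapezoidShape h ∨ B = squareShape h)}

/-- A class of finite graphs is `⊑`-representable. -/
def SqRepresentable (𝒢 : ∀ V : Type, Fintype V → SimpleGraph V → Prop) : Prop :=
  ∃ d c s : ℕ, 0 < d ∧ 0 < c ∧ 0 < s ∧
    ∀ (V : Type) (instV : Fintype V) (G : SimpleGraph V), 𝒢 V instV G →
      ∃ S : Set (Set (Euc d)), (∀ B ∈ S, Convex ℝ B ∧ IsShape B) ∧
        S.Pairwise (SqComparable (s : ℝ)) ∧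
        ∃ φ : V → Set (Euc d), IsIntersectionRep G φ ∧ IsThin (c : ℝ) φ ∧ IsSShaped S φ

end

/-!
If every linear functional varies on `B₁` by at most `t` times as much as on `B₂`, then a
translate of `B₁` lies in `2(d+1)t • B₂`: take a simplex of maximal volume with vertices in `B₂`;
its barycentric coordinates are bounded by `1` on `B₂`, hence vary by at most `2t` on `B₁`, which
confines a translate of `B₁` to the simplex scaled by `2(d+1)t`. As `2(d+1) ≤ 2d^{5/2}` for
`d ≥ 2`, incomparability yields functionals `L₁`, `L₂` such that `B₁` is more than `m` times
wider than `B₂` along `L₁` and `B₂` more than `m` times wider than `B₁` along `L₂`. Then `m`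
translates of `B₁` spaced by `1/m` of the `L₂`-width of `B₂` are pairwise disjoint, and likewise
for `B₂`; shifting the two families along each other's long direction makes every translate of
`B₁` meet every translate of `B₂`. In dimension one the width does not depend on the functional,
so two shapes are always `≤ₖ`-comparable for `k ≥ 1`.
-/

section Width

variable {α : Type*} {f : α → ℝ} {B : Set α}

theorem sub_le_diam_image [TopologicalSpace α] (hf : Continuous f) (hB : IsCompact B) {x y : α}
    (hx : x ∈ B) (hy : y ∈ B) : f x - f y ≤ diam (f '' B) :=
  (le_abs_self _).trans <|
    dist_le_diam_of_mem (hB.image hf).isBounded (Set.mem_image_of_mem f hx)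
      (Set.mem_image_of_mem f hy)

theorem diam_image_le_of_forall_sub_le (hne : B.Nonempty) {C : ℝ}
    (h : ∀ x ∈ B, ∀ y ∈ B, f x - f y ≤ C) : diam (f '' B) ≤ C := by
  obtain ⟨x₀, hx₀⟩ := hne
  refine diam_le_of_forall_dist_le (by simpa using h x₀ hx₀ x₀ hx₀) ?_
  rintro _ ⟨x, hx, rfl⟩ _ ⟨y, hy, rfl⟩
  exact abs_sub_le_iff.2 ⟨h x hx y hy, h y hy x hx⟩

theorem exists_sub_eq_diam_image [TopologicalSpace α] (hf : Continuous f) (hB : IsCompact B)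
    (hne : B.Nonempty) : ∃ x ∈ B, ∃ y ∈ B, f x - f y = diam (f '' B) := by
  have hK := hB.image hf
  obtain ⟨x, hx, hfx⟩ := hK.sSup_mem (hne.image f)
  obtain ⟨y, hy, hfy⟩ := hK.sInf_mem (hne.image f)
  exact ⟨x, hx, y, hy, by rw [Real.diam_eq hK.isBounded, hfx, hfy]⟩

end Width

namespace AffineBasis

theorem det_toMatrix_update {ι k V P : Type*} [Fintype ι] [DecidableEq ι] [CommRing k]
    [AddCommGroup V] [Module k V] [AddTorsor V P] (b₀ b : AffineBasis ι k P) (i : ι) (x : P) :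
    (b₀.toMatrix (Function.update b i x)).det = (b₀.toMatrix b).det * b.coord i x := by
  have h := congrFun (b₀.det_smul_coords_eq_cramer_coords b x) i
  rw [Pi.smul_apply, smul_eq_mul, coords_apply, Matrix.cramer_apply,
    Matrix.updateCol_transpose, Matrix.det_transpose] at h
  rw [h]
  congr 1
  ext j l
  by_cases hj : j = i
  · subst hj; simp [toMatrix_apply]
  · simp [toMatrix_apply, Matrix.updateRow_apply, hj]

variable {ι V : Type*} [Fintype ι]

theorem exists_le_coord {P : Type*} [AddCommGroup V] [Module ℝ V] [AddTorsor V P]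
    (b : AffineBasis ι ℝ P) {r : ι → ℝ} (hr : ∑ i, r i ≤ 1) : ∃ p, ∀ i, r i ≤ b.coord i p := by
  have := b.nonempty
  set δ := (1 - ∑ i, r i) / Fintype.card ι
  have hδ : 0 ≤ δ := div_nonneg (by linarith) (by positivity)
  have hw : ∑ i, (r i + δ) = 1 := by
    rw [Finset.sum_add_distrib, Finset.sum_const, Finset.card_univ, nsmul_eq_mul,
      mul_div_cancel₀ _ (by positivity)]
    ring
  refine ⟨Finset.univ.affineCombination ℝ b fun i => r i + δ, fun i => ?_⟩
  rw [b.coord_apply_combination_of_mem (Finset.mem_univ i) hw]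
  linarith

theorem exists_vadd_subset_smul_convexHull [AddCommGroup V] [Module ℝ V] (b : AffineBasis ι ℝ V)
    {B : Set V} {a : ι → ℝ} {c : ℝ} (hc : 0 < c) (ha : ∀ x ∈ B, ∀ i, a i ≤ b.coord i x)
    (hsum : 1 - c ≤ ∑ i, a i) : ∃ v : V, v +ᵥ B ⊆ c • convexHull ℝ (Set.range b) := by
  obtain ⟨p, hp⟩ := b.exists_le_coord (r := fun i => (b.coord i 0 - a i) / c) (by
    rw [← Finset.sum_div, Finset.sum_sub_distrib, b.sum_coord_apply_eq_one, div_le_one hc]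
    linarith)
  refine ⟨c • p, ?_⟩
  rintro _ ⟨x, hx, rfl⟩
  refine ⟨p + c⁻¹ • x, ?_, ?_⟩
  · rw [b.convexHull_eq_nonneg_coord]
    intro i
    have hf : ∀ y, b.coord i y = (b.coord i).linear y + b.coord i 0 := fun y => by
      simpa using congrFun (b.coord i).decomp y
    have hcoord :
        c * b.coord i (p + c⁻¹ • x) = c * b.coord i p + (b.coord i x - b.coord i 0) := by
      rw [hf (p + c⁻¹ • x), hf p, hf x, map_add, map_smul, smul_eq_mul]
      field_simp
      ring
    have h1 := (div_le_iff₀' hc).1 (hp i)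
    have h2 := ha x hx i
    refine le_of_mul_le_mul_left ?_ hc
    rw [mul_zero, hcoord]
    linarith
  · simp [smul_add, smul_inv_smul₀ hc.ne', add_comm]

theorem exists_abs_coord_le_one [DecidableEq ι] [NormedAddCommGroup V] [NormedSpace ℝ V]
    [FiniteDimensional ℝ V] {K : Set V} (hK : IsCompact K) (b₀ : AffineBasis ι ℝ V)
    (hb₀ : ∀ i, b₀ i ∈ K) :
    ∃ b : AffineBasis ι ℝ V, (∀ i, b i ∈ K) ∧ ∀ x ∈ K, ∀ i, |b.coord i x| ≤ 1 := by
  have hcont : Continuous fun v : ι → V => |(b₀.toMatrix v).det| :=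
    (Continuous.matrix_det <| continuous_matrix fun i j =>
      (b₀.coord j).continuous_of_finiteDimensional.comp (continuous_apply i)).abs
  obtain ⟨v, hvK, hvmax⟩ := (isCompact_univ_pi fun _ : ι => hK).exists_isMaxOn
    ⟨b₀, fun i _ => hb₀ i⟩ hcont.continuousOn
  have hdet : (b₀.toMatrix v).det ≠ 0 := by
    intro h0
    have := hvmax (show ⇑b₀ ∈ Set.univ.pi fun _ => K from fun i _ => hb₀ i)
    simp [h0, b₀.toMatrix_self] at this
  obtain ⟨hind, hspan⟩ :=
    (b₀.isUnit_toMatrix_iff v).1 ((Matrix.isUnit_iff_isUnit_det _).2 hdet.isUnit)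
  let b : AffineBasis ι ℝ V := ⟨v, hind, hspan⟩
  refine ⟨b, fun i => hvK i trivial, fun x hx i => ?_⟩
  have hupd : Function.update v i x ∈ Set.univ.pi fun _ => K := by
    intro j _
    by_cases hj : j = i
    · subst hj; simpa using hx
    · simpa [hj] using hvK j trivial
  have hle : |(b₀.toMatrix b).det * b.coord i x| ≤ |(b₀.toMatrix b).det| := by
    rw [← det_toMatrix_update]
    exact hvmax hupd
  rw [abs_mul] at hle
  exact le_of_mul_le_mul_left (by rwa [mul_one]) (abs_pos.2 hdet)

end AffineBasis

theorem IsShape.nonempty {d : ℕ} {B : Set (Euc d)} (h : IsShape B) : B.Nonempty :=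
  (affineSpan_nonempty (k := ℝ)).1 (h.2 ▸ ⟨0, AffineSubspace.mem_top ℝ (Euc d) 0⟩)

theorem leK_of_forall_diam_image_le {d : ℕ} {B₁ B₂ : Set (Euc d)} (h₂conv : Convex ℝ B₂)
    (h₁ : IsCompact B₁) (h₂ : IsShape B₂) {t : ℝ} (ht : 0 < t)
    (h : ∀ L : Euc d →ₗ[ℝ] ℝ, diam (L '' B₁) ≤ t * diam (L '' B₂)) :
    LeK (2 * ((d : ℝ) + 1) * t) B₁ B₂ := by
  classical
  rcases B₁.eq_empty_or_nonempty with rfl | ⟨x₀, hx₀⟩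
  · exact ⟨0, by simp⟩
  obtain ⟨s, hsB, b₀, hb₀⟩ := AffineBasis.exists_affine_subbasis h₂.2
  have : Fintype s := @Fintype.ofFinite _ (finite_of_fin_dim_affineIndependent ℝ b₀.ind)
  obtain ⟨b, hbB, hb⟩ := AffineBasis.exists_abs_coord_le_one h₂.1 b₀ fun i => hb₀ ▸ hsB i.2
  have hlin : ∀ i x y, (b.coord i).linear (x - y) = b.coord i x - b.coord i y := fun i x y =>
    (b.coord i).linearMap_vsub x y
  have hosc : ∀ x ∈ B₁, ∀ i, b.coord i x₀ - 2 * t ≤ b.coord i x := by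
    intro x hx i
    have h₂wid : diam ((b.coord i).linear '' B₂) ≤ 2 :=
      diam_image_le_of_forall_sub_le h₂.nonempty fun y hy y' hy' => by
        rw [← map_sub, hlin]
        linarith [abs_le.1 (hb y hy i), abs_le.1 (hb y' hy' i)]
    have := sub_le_diam_image (b.coord i).linear.continuous_of_finiteDimensional h₁ hx₀ hx
    rw [← map_sub, hlin] at this
    nlinarith [h (b.coord i).linear]
  have hcard : (Fintype.card s : ℝ) = d + 1 := by
    rw [b.card_eq_finrank_add_one, finrank_euclideanSpace_fin]
    push_cast; ring
  have hsum : 1 - 2 * ((d : ℝ) + 1) * t ≤ ∑ i, (b.coord i x₀ - 2 * t) := by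
    rw [Finset.sum_sub_distrib, b.sum_coord_apply_eq_one, Finset.sum_const, Finset.card_univ,
      nsmul_eq_mul, hcard]
    linarith
  obtain ⟨v, hv⟩ := b.exists_vadd_subset_smul_convexHull (by positivity) hosc hsum
  exact ⟨v, hv.trans (Set.smul_set_mono (convexHull_min (Set.range_subset_iff.2 hbB) h₂conv))⟩

theorem leK_of_diam_image_le_of_one_dim {B₁ B₂ : Set (Euc 1)} (h₁ : IsCompact B₁)
    (h₂conv : Convex ℝ B₂) (h₂ : IsCompact B₂) (h₂ne : B₂.Nonempty) {k : ℝ} (hk : 0 < k)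
    (h : diam ((· 0) '' B₁) ≤ k * diam ((· 0) '' B₂)) : LeK k B₁ B₂ := by
  have hπ : Continuous fun x : Euc 1 => x 0 := by fun_prop
  rcases B₁.eq_empty_or_nonempty with rfl | h₁ne
  · exact ⟨0, by simp⟩
  obtain ⟨p, hp, hpmax⟩ := h₂.exists_isMaxOn h₂ne hπ.continuousOn
  obtain ⟨q, hq, hqmin⟩ := h₂.exists_isMinOn h₂ne hπ.continuousOn
  obtain ⟨r, hr, hrmin⟩ := h₁.exists_isMinOn h₁ne hπ.continuousOn
  have hw : diam ((· 0) '' B₂) ≤ p 0 - q 0 :=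
    diam_image_le_of_forall_sub_le h₂ne fun y hy y' hy' => by
      linarith [show y 0 ≤ p 0 from hpmax hy, show q 0 ≤ y' 0 from hqmin hy']
  refine ⟨k • q - r, ?_⟩
  rintro _ ⟨x, hx, rfl⟩
  have hx₀ : 0 ≤ x 0 - r 0 := sub_nonneg.2 (hrmin hx)
  have hxr : x 0 - r 0 ≤ k * (p 0 - q 0) :=
    (sub_le_diam_image hπ h₁ hx hr).trans (h.trans (by gcongr))
  set θ := (x 0 - r 0) / (k * (p 0 - q 0))
  have hθ : k * (p 0 - q 0) * θ = x 0 - r 0 := by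
    rcases eq_or_ne (k * (p 0 - q 0)) 0 with h0 | h0
    · simp only [θ, h0, zero_mul, div_zero]; linarith
    · exact mul_div_cancel₀ _ h0
  refine ⟨q + θ • (p - q), h₂conv.add_smul_sub_mem hq hp
    ⟨div_nonneg hx₀ (hx₀.trans hxr), div_le_one_of_le₀ hxr (hx₀.trans hxr)⟩, ?_⟩
  ext i
  fin_cases i
  simp only [Fin.zero_eta, Fin.isValue, vadd_eq_add, PiLp.add_apply, PiLp.sub_apply,
    PiLp.smul_apply, smul_add, smul_eq_mul]
  linarith

theorem leK_or_leK_of_one_dim {B₁ B₂ : Set (Euc 1)} (h₁conv : Convex ℝ B₁) (h₁ : IsCompact B₁)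
    (h₁ne : B₁.Nonempty) (h₂conv : Convex ℝ B₂) (h₂ : IsCompact B₂) (h₂ne : B₂.Nonempty)
    {k : ℝ} (hk : 1 ≤ k) : LeK k B₁ B₂ ∨ LeK k B₂ B₁ := by
  rcases le_total (diam ((· 0) '' B₁)) (diam ((· 0) '' B₂)) with h | h
  · exact .inl <| leK_of_diam_image_le_of_one_dim h₁ h₂conv h₂ h₂ne (by linarith)
      (h.trans (le_mul_of_one_le_left diam_nonneg hk))
  · exact .inr <| leK_of_diam_image_le_of_one_dim h₂ h₁conv h₁ h₁ne (by linarith)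
      (h.trans (le_mul_of_one_le_left diam_nonneg hk))

theorem disjoint_smul_sub_vadd_of_lt {E : Type*} [AddCommGroup E] [Module ℝ E] {B : Set E}
    {L : E →ₗ[ℝ] ℝ} {e u : E} {a a' : ℝ}
    (h : ∀ y ∈ B, ∀ y' ∈ B, L y - L y' < |a - a'| * L e) :
    Disjoint ((a • e - u) +ᵥ B) ((a' • e - u) +ᵥ B) := by
  refine Set.disjoint_left.2 fun z hz hz' => ?_
  rw [Set.mem_vadd_set_iff_neg_vadd_mem, vadd_eq_add] at hz hz'
  have h₁ := h _ hz _ hz'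
  have h₂ := h _ hz' _ hz
  simp only [map_add, map_neg, map_sub, map_smul, smul_eq_mul] at h₁ h₂
  rcases abs_cases (a - a') with ⟨habs, -⟩ | ⟨habs, -⟩ <;> rw [habs] at h₁ h₂ <;> linarith

theorem isIntersectionRep_completeBipartiteGraph {α β : Type*} {d : ℕ}
    {φ : α ⊕ β → Set (Euc d)} (hne : ∀ v, (φ v).Nonempty)
    (hl : Pairwise (Disjoint on fun i => φ (.inl i)))
    (hr : Pairwise (Disjoint on fun j => φ (.inr j)))
    (hlr : ∀ i j, (φ (.inl i) ∩ φ (.inr j)).Nonempty) :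
    IsIntersectionRep (completeBipartiteGraph α β) φ := by
  refine ⟨hne, ?_⟩
  rintro (i | j) (i' | j') huv
  · exact iff_of_false (Set.disjoint_iff_inter_eq_empty.1 (hl fun h => huv (congrArg _ h)) ▸
      Set.not_nonempty_empty) (by simp)
  · exact iff_of_true (hlr i j') (by simp)
  · exact iff_of_true (Set.inter_comm _ _ ▸ hlr i' j) (by simp)
  · exact iff_of_false (Set.disjoint_iff_inter_eq_empty.1 (hr fun h => huv (congrArg _ h)) ▸
      Set.not_nonempty_empty) (by simp)

theorem isThin_two_of_pairwise_disjoint {α β : Type*} {d : ℕ} {φ : α ⊕ β → Set (Euc d)}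
    (hl : Pairwise (Disjoint on fun i => φ (.inl i)))
    (hr : Pairwise (Disjoint on fun j => φ (.inr j))) : IsThin 2 φ := by
  intro x
  have hinj : Set.InjOn Sum.isLeft {v | x ∈ φ v} := by
    rintro (i | j) hu (i' | j') hv h
    · by_contra hne
      exact Set.disjoint_left.1 (hl fun h => hne (congrArg _ h)) hu hv
    · simp at h
    · simp at h
    · by_contra hne
      exact Set.disjoint_left.1 (hr fun h => hne (congrArg _ h)) hu hv
  have := Set.ncard_le_ncard_of_injOn _ (fun _ _ => Set.mem_univ _) hinj Set.finite_univ
  rw [Set.ncard_univ, Nat.card_eq_fintype_card, Fintype.card_bool] at this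
  exact_mod_cast this

theorem pairwise_disjoint_smul_sub_vadd {ι : Type*} {d : ℕ} {B : Set (Euc d)} (hB : IsCompact B)
    {L : Euc d →ₗ[ℝ] ℝ} {e : Euc d} {c : ι → ℝ} {t : ℝ}
    (hc : ∀ i i', i ≠ i' → 1 ≤ t * |c i - c i'|) (hL : t * diam (L '' B) < L e) (u : Euc d) :
    Pairwise (Disjoint on fun i => (c i • e - u) +ᵥ B) := by
  intro i i' hii
  refine disjoint_smul_sub_vadd_of_lt (L := L) fun y hy y' hy' => ?_
  have hD := sub_le_diam_image L.continuous_of_finiteDimensional hB hy hy'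
  have hsep := hc i i' hii
  have ht : 0 ≤ t := by
    by_contra! ht
    nlinarith [abs_nonneg (c i - c i')]
  have hW : 0 < L e := lt_of_le_of_lt (mul_nonneg ht diam_nonneg) hL
  by_contra! hle
  nlinarith [mul_nonneg (sub_nonneg.2 hsep) hW.le, mul_le_mul_of_nonneg_left (hle.trans hD) ht]

theorem exists_completeBipartiteGraph_rep {d m : ℕ} {S : Set (Set (Euc d))}
    {B₁ B₂ : Set (Euc d)} (hB₁ : B₁ ∈ S) (hB₂ : B₂ ∈ S) (h₁conv : Convex ℝ B₁) (h₁ : IsCompact B₁)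
    (h₁ne : B₁.Nonempty)
    (h₂conv : Convex ℝ B₂) (h₂ : IsCompact B₂) (h₂ne : B₂.Nonempty) {L₁ L₂ : Euc d →ₗ[ℝ] ℝ}
    (hL₁ : m * diam (L₁ '' B₂) < diam (L₁ '' B₁)) (hL₂ : m * diam (L₂ '' B₁) < diam (L₂ '' B₂)) :
    ∃ φ : Fin m ⊕ Fin m → Set (Euc d),
      IsIntersectionRep (completeBipartiteGraph (Fin m) (Fin m)) φ ∧ IsThin 2 φ ∧
        IsSShaped S φ := by
  obtain ⟨xp, hxp, xm, hxm, he⟩ :=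
    exists_sub_eq_diam_image L₁.continuous_of_finiteDimensional h₁ h₁ne
  obtain ⟨yp, hyp, ym, hym, hf⟩ :=
    exists_sub_eq_diam_image L₂.continuous_of_finiteDimensional h₂ h₂ne
  set c : Fin m → ℝ := fun i => (i : ℝ) / m
  have hc : ∀ i, c i ∈ Set.Icc (0 : ℝ) 1 := fun i =>
    ⟨by positivity, div_le_one_of_le₀ (by exact_mod_cast i.isLt.le) (Nat.cast_nonneg m)⟩
  have hsep : ∀ i i', i ≠ i' → 1 ≤ (m : ℝ) * |c i - c i'| := by
    intro i i' hii
    have hm : (0 : ℝ) < m := by have := i.pos; positivity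
    have h1 : (1 : ℝ) ≤ |(i : ℝ) - i'| := by
      exact_mod_cast Int.one_le_abs (sub_ne_zero.2 (by omega : (i : ℤ) ≠ i'))
    rwa [show c i - c i' = ((i : ℝ) - i') / m by simp only [c]; ring, abs_div, abs_of_pos hm,
      mul_div_cancel₀ _ hm.ne']
  set φ : Fin m ⊕ Fin m → Set (Euc d) :=
    Sum.elim (fun i => (c i • (yp - ym) - xm) +ᵥ B₁) (fun j => (c j • (xp - xm) - ym) +ᵥ B₂)
  have hl : Pairwise (Disjoint on fun i => φ (.inl i)) :=
    pairwise_disjoint_smul_sub_vadd h₁ hsep (by rwa [map_sub, hf]) xm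
  have hr : Pairwise (Disjoint on fun j => φ (.inr j)) :=
    pairwise_disjoint_smul_sub_vadd h₂ hsep (by rwa [map_sub, he]) ym
  have hlr : ∀ i j, (φ (.inl i) ∩ φ (.inr j)).Nonempty := by
    intro i j
    refine ⟨c j • (xp - xm) + c i • (yp - ym), ?_, ?_⟩ <;>
      simp only [φ, Sum.elim_inl, Sum.elim_inr, Set.mem_vadd_set_iff_neg_vadd_mem, vadd_eq_add]
    · convert h₁conv.add_smul_sub_mem hxm hxp (hc j) using 1; abel
    · convert h₂conv.add_smul_sub_mem hym hyp (hc i) using 1; abel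
  have hne : ∀ v, (φ v).Nonempty := Sum.forall.2 ⟨fun _ => h₁ne.vadd_set, fun _ => h₂ne.vadd_set⟩
  exact ⟨φ, isIntersectionRep_completeBipartiteGraph hne hl hr hlr,
    isThin_two_of_pairwise_disjoint hl hr,
    Sum.forall.2 ⟨fun _ => ⟨B₁, hB₁, _, rfl⟩, fun _ => ⟨B₂, hB₂, _, rfl⟩⟩⟩

theorem add_one_le_rpow_five_div_two {x : ℝ} (hx : 2 ≤ x) : x + 1 ≤ x ^ ((5 : ℝ) / 2) :=
  calc x + 1 ≤ x ^ (2 : ℝ) := by rw [Real.rpow_two]; nlinarith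
    _ ≤ x ^ ((5 : ℝ) / 2) := Real.rpow_le_rpow_of_exponent_le (by linarith) (by norm_num)

theorem stmt3 (d : ℕ) (hd : 0 < d) (S : Set (Set (Euc d)))
    (hS : ∀ B ∈ S, Convex ℝ B ∧ IsShape B) (m : ℕ) (hm : 0 < m)
    (B₁ B₂ : Set (Euc d)) (hB₁ : B₁ ∈ S) (hB₂ : B₂ ∈ S)
    (h1 : ¬ LeK (2 * (d : ℝ) ^ ((5 : ℝ) / 2) * m) B₁ B₂)
    (h2 : ¬ LeK (2 * (d : ℝ) ^ ((5 : ℝ) / 2) * m) B₂ B₁) :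
    ∃ φ : Fin m ⊕ Fin m → Set (Euc d),
      IsIntersectionRep (completeBipartiteGraph (Fin m) (Fin m)) φ ∧
      IsThin 2 φ ∧ IsSShaped S φ := by
  obtain ⟨h₁conv, h₁⟩ := hS B₁ hB₁
  obtain ⟨h₂conv, h₂⟩ := hS B₂ hB₂
  obtain rfl | hd2 : d = 1 ∨ 2 ≤ d := by omega
  · have hk : (1 : ℝ) ≤ 2 * ((1 : ℕ) : ℝ) ^ ((5 : ℝ) / 2) * m := by
      have : (1 : ℝ) ≤ m := by exact_mod_cast hm
      simp only [Nat.cast_one, Real.one_rpow]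
      linarith
    exact ((leK_or_leK_of_one_dim h₁conv h₁.1 h₁.nonempty h₂conv h₂.1 h₂.nonempty hk).elim
      h1 h2).elim
  set t : ℝ := (d : ℝ) ^ ((5 : ℝ) / 2) * m / ((d : ℝ) + 1)
  have hk : 2 * ((d : ℝ) + 1) * t = 2 * (d : ℝ) ^ ((5 : ℝ) / 2) * m := by
    simp only [t]; field_simp
  have hmt : (m : ℝ) ≤ t := by
    rw [le_div_iff₀ (by positivity)]
    have := add_one_le_rpow_five_div_two (by exact_mod_cast hd2 : (2 : ℝ) ≤ d)
    nlinarith [(Nat.cast_nonneg m : (0 : ℝ) ≤ m)]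
  have ht : 0 < t := lt_of_lt_of_le (by exact_mod_cast hm) hmt
  have hwide : ∀ {A B : Set (Euc d)}, IsCompact A → Convex ℝ B → IsShape B →
      ¬ LeK (2 * (d : ℝ) ^ ((5 : ℝ) / 2) * m) A B →
      ∃ L : Euc d →ₗ[ℝ] ℝ, m * diam (L '' B) < diam (L '' A) := by
    intro A B hA hBconv hB hAB
    by_contra! h
    exact hAB (hk ▸ leK_of_forall_diam_image_le hBconv hA hB ht fun L =>
      (h L).trans (by gcongr))
  obtain ⟨L₁, hL₁⟩ := hwide h₁.1 h₂conv h₂ h1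
  obtain ⟨L₂, hL₂⟩ := hwide h₂.1 h₁conv h₁ h2
  exact exists_completeBipartiteGraph_rep hB₁ hB₂ h₁conv h₁.1 h₁.nonempty h₂conv h₂.1
    h₂.nonempty hL₁ hL₂
end

section
/- Every convex shape B in ℝ^d of height h contains a closed ball of diameter h/d. -/
open MeasureTheory Set Pointwise Metric Function
open scoped RealInnerProductSpace ENNReal

/-! Take a largest closed ball `closedBall z r` inside `B`. If the unit outer normals `u` at its
contact points (those with `supportFun B u = ⟪u, z⟫ + r`) all lay in an open half-space, moving
the centre slightly to the opposite side would make room for a larger ball; hence `0` lies in the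
closure of their convex hull. By Carathéodory, a point of that hull near `0` is a convex
combination of at most `d + 1` contact normals, one of weight at least `1 / (d + 1)`. As every
contact normal satisfies `⟪u, x - z⟫ ≤ r` on `B`, that heavy normal confines `B` to a slab of
width `(d + 1) r`, so `heightOf B ≤ (d + 1) r ≤ 2 d r`. -/

section SupportFunction

variable {E : Type*} [NormedAddCommGroup E] [InnerProductSpace ℝ E]

noncomputable def supportFun (B : Set E) (u : E) : ℝ :=
  sSup ((fun x => ⟪u, x⟫) '' B)

variable {B : Set E}

lemma inner_le_supportFun (hB : IsCompact B) (u : E) {x : E} (hx : x ∈ B) :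
    ⟪u, x⟫ ≤ supportFun B u :=
  le_csSup (hB.bddAbove_image (continuous_const.inner continuous_id).continuousOn)
    ⟨x, hx, rfl⟩

lemma supportFun_le (hne : B.Nonempty) {u : E} {c : ℝ} (h : ∀ x ∈ B, ⟪u, x⟫ ≤ c) :
    supportFun B u ≤ c :=
  csSup_le (hne.image _) (by rintro _ ⟨x, hx, rfl⟩; exact h x hx)

lemma continuous_supportFun (hB : IsCompact B) (hne : B.Nonempty) :
    Continuous (supportFun B) := by
  obtain ⟨R, hR⟩ := hB.isBounded.subset_closedBall 0
  refine (LipschitzWith.of_le_add_mul' R fun u u' => ?_).continuous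
  refine supportFun_le hne fun x hx => ?_
  have hxR : ‖x‖ ≤ R := by simpa using hR hx
  calc ⟪u, x⟫ = ⟪u', x⟫ + ⟪u - u', x⟫ := by rw [inner_sub_left]; ring
    _ ≤ supportFun B u' + ‖u - u'‖ * ‖x‖ :=
      add_le_add (inner_le_supportFun hB u' hx) (real_inner_le_norm _ _)
    _ ≤ supportFun B u' + R * dist u u' := by
      rw [dist_eq_norm, mul_comm R]; gcongr

lemma closedBall_subset_iff_forall_inner_add_le_supportFun [CompleteSpace E]
    (hconv : Convex ℝ B) (hB : IsCompact B) (hne : B.Nonempty) (c : E) {ρ : ℝ}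
    (hρ : 0 ≤ ρ) :
    closedBall c ρ ⊆ B ↔ ∀ u ∈ sphere (0 : E) 1, ⟪u, c⟫ + ρ ≤ supportFun B u := by
  constructor
  · intro hball u hu
    rw [mem_sphere_zero_iff_norm] at hu
    have hmem : c + ρ • u ∈ B := hball (by simp [norm_smul, hu, abs_of_nonneg hρ])
    simpa [inner_add_right, real_inner_smul_right, real_inner_self_eq_norm_sq, hu]
      using inner_le_supportFun hB u hmem
  · intro h x hx
    by_contra hxB
    obtain ⟨φ, t, hφB, hφx⟩ := geometric_hahn_banach_closed_point hconv hB.isClosed hxB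
    set v := (InnerProductSpace.toDual ℝ E).symm φ
    have hv : ∀ y, ⟪v, y⟫ = φ y := fun y => InnerProductSpace.toDual_symm_apply
    have hv0 : v ≠ 0 := by
      rintro hv0
      obtain ⟨b, hb⟩ := hne
      have := hφB b hb
      simp only [← hv, hv0, inner_zero_left] at this hφx
      linarith
    have hvpos : 0 < ‖v‖ := norm_pos_iff.mpr hv0
    have hu : ‖‖v‖⁻¹ • v‖ = 1 := by
      rw [norm_smul, norm_inv, norm_norm, inv_mul_cancel₀ hvpos.ne']
    have hsupp : supportFun B (‖v‖⁻¹ • v) ≤ ‖v‖⁻¹ * t :=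
      supportFun_le hne fun b hb => by
        rw [real_inner_smul_left, hv]; gcongr; exact (hφB b hb).le
    have hxc : ⟪‖v‖⁻¹ • v, x - c⟫ ≤ ρ := by
      calc _ ≤ ‖‖v‖⁻¹ • v‖ * ‖x - c‖ := real_inner_le_norm _ _
        _ ≤ ρ := by rw [hu, one_mul, ← dist_eq_norm]; exact hx
    have hc := h _ (mem_sphere_zero_iff_norm.mpr hu)
    have hlt : ‖v‖⁻¹ * t < ‖v‖⁻¹ * φ x := by gcongr
    rw [inner_sub_right] at hxc
    simp only [real_inner_smul_left, hv] at hc hxc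
    linarith

end SupportFunction

lemma IsCompact.exists_pos_forall_lt_sub_mul {X : Type*} [TopologicalSpace X] {S : Set X}
    (hS : IsCompact S) {g ℓ : X → ℝ} (hg : Continuous g) (hℓ : Continuous ℓ) {r : ℝ}
    (hgr : ∀ u ∈ S, r ≤ g u) (hℓneg : ∀ u ∈ S, g u = r → ℓ u < 0) :
    ∃ ε > 0, ∀ u ∈ S, r < g u - ε * ℓ u := by
  have hS' : IsCompact (S ∩ {u | 0 ≤ ℓ u}) :=
    hS.inter_right (isClosed_le continuous_const hℓ)
  rcases (S ∩ {u | 0 ≤ ℓ u}).eq_empty_or_nonempty with hempty | hne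
  · refine ⟨1, one_pos, fun u hu => ?_⟩
    have : ℓ u < 0 := not_le.mp fun h => hempty.subset ⟨hu, h⟩
    linarith [hgr u hu]
  obtain ⟨u₀, ⟨hu₀S, hu₀ℓ⟩, hmin⟩ := hS'.exists_isMinOn hne hg.continuousOn
  have hgap : r < g u₀ :=
    (hgr u₀ hu₀S).lt_of_ne fun h => (hℓneg u₀ hu₀S h.symm).not_ge hu₀ℓ
  obtain ⟨L, hL⟩ := hS.bddAbove_image hℓ.continuousOn
  have hL0 : 0 ≤ L := hu₀ℓ.trans (hL ⟨u₀, hu₀S, rfl⟩)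
  refine ⟨(g u₀ - r) / (L + 1), by positivity, fun u hu => ?_⟩
  rcases le_or_gt 0 (ℓ u) with hℓu | hℓu
  · have hεL : (g u₀ - r) / (L + 1) * ℓ u < g u₀ - r := by
      rw [div_mul_eq_mul_div, div_lt_iff₀ (by positivity)]
      have : ℓ u ≤ L := hL ⟨u, hu, rfl⟩
      nlinarith
    linarith [isMinOn_iff.mp hmin u ⟨hu, hℓu⟩]
  · have : (g u₀ - r) / (L + 1) * ℓ u < 0 := mul_neg_of_pos_of_neg (by positivity) hℓu
    linarith [hgr u hu]

section LargestBall

variable {E : Type*} [NormedAddCommGroup E] [InnerProductSpace ℝ E]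

def IsLargestBallIn (B : Set E) (z : E) (r : ℝ) : Prop :=
  0 ≤ r ∧ closedBall z r ⊆ B ∧ ∀ c ρ, 0 ≤ ρ → closedBall c ρ ⊆ B → ρ ≤ r

def contactNormals (B : Set E) (z : E) (r : ℝ) : Set E :=
  {u ∈ sphere (0 : E) 1 | supportFun B u = ⟪u, z⟫ + r}

variable [FiniteDimensional ℝ E] [Nontrivial E] {B : Set E}

lemma IsCompact.exists_isLargestBallIn (hconv : Convex ℝ B) (hB : IsCompact B)
    (hne : B.Nonempty) : ∃ z r, IsLargestBallIn B z r := by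
  let K : Set (E × ℝ) := {p | 0 ≤ p.2 ∧ closedBall p.1 p.2 ⊆ B}
  have hK : K = {p | 0 ≤ p.2} ∩
      ⋂ u ∈ sphere (0 : E) 1, {p | ⟪u, p.1⟫ + p.2 ≤ supportFun B u} := by
    ext ⟨c, ρ⟩
    simp only [K, mem_inter_iff, mem_iInter, mem_ofPred_eq]
    exact and_congr_right fun hρ =>
      closedBall_subset_iff_forall_inner_add_le_supportFun hconv hB hne c hρ
  have hKclosed : IsClosed K := hK ▸ (isClosed_le continuous_const continuous_snd).inter
    (isClosed_biInter fun u _ => isClosed_le (by fun_prop) continuous_const)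
  have hKsub : K ⊆ B ×ˢ Icc 0 (diam B) := by
    rintro ⟨c, ρ⟩ ⟨hρ, hball⟩
    obtain ⟨e, he⟩ := exists_norm_eq E zero_le_one
    have hc : c ∈ B := hball (mem_closedBall_self hρ)
    have hce : c + ρ • e ∈ B := hball (by simp [norm_smul, he, abs_of_nonneg hρ])
    refine ⟨hc, hρ, ?_⟩
    calc ρ = dist (c + ρ • e) c := by simp [norm_smul, he, abs_of_nonneg hρ]
      _ ≤ diam B := dist_le_diam_of_mem hB.isBounded hce hc
  obtain ⟨b, hb⟩ := hne
  obtain ⟨⟨z, r⟩, ⟨hr, hball⟩, hmax⟩ :=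
    ((hB.prod isCompact_Icc).of_isClosed_subset hKclosed hKsub).exists_isMaxOn
      ⟨(b, 0), le_rfl, by simpa using hb⟩ continuous_snd.continuousOn
  exact ⟨z, r, hr, hball, fun c ρ hρ hcρ => isMaxOn_iff.mp hmax (c, ρ) ⟨hρ, hcρ⟩⟩

lemma IsLargestBallIn.zero_mem_closure_convexHull (hconv : Convex ℝ B) (hB : IsCompact B)
    (hne : B.Nonempty) {z : E} {r : ℝ} (h : IsLargestBallIn B z r) :
    (0 : E) ∈ closure (convexHull ℝ (contactNormals B z r)) := by
  by_contra h0
  obtain ⟨φ, t, hφ0, hφD⟩ :=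
    geometric_hahn_banach_point_closed (convex_convexHull ℝ _).closure isClosed_closure h0
  rw [map_zero] at hφ0
  set g : E → ℝ := fun u => supportFun B u - ⟪u, z⟫
  have hg : Continuous g := (continuous_supportFun hB hne).sub (by fun_prop)
  have hgr : ∀ u ∈ sphere (0 : E) 1, r ≤ g u := fun u hu => by
    have := (closedBall_subset_iff_forall_inner_add_le_supportFun hconv hB hne z h.1).mp
      h.2.1 u hu
    simp only [g]; linarith
  have hφneg : ∀ u ∈ sphere (0 : E) 1, g u = r → -φ u < 0 := fun u hu hgu => by
    have : u ∈ contactNormals B z r := ⟨hu, by simp only [g] at hgu; linarith⟩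
    linarith [hφD u (subset_closure (subset_convexHull ℝ _ this))]
  obtain ⟨ε, hε, hεr⟩ := (isCompact_sphere (0 : E) 1).exists_pos_forall_lt_sub_mul hg
    (by fun_prop) hgr hφneg
  obtain ⟨u₁, hu₁, hmin⟩ := (isCompact_sphere (0 : E) 1).exists_isMinOn
    (NormedSpace.sphere_nonempty.mpr zero_le_one)
    (f := fun u => g u + ε * φ u) (by fun_prop)
  set w := (InnerProductSpace.toDual ℝ E).symm φ
  have hw : ∀ u, ⟪u, w⟫ = φ u := fun u => by
    rw [real_inner_comm]; exact InnerProductSpace.toDual_symm_apply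
  have hr' : r < g u₁ + ε * φ u₁ := by simpa using hεr u₁ hu₁
  have hball : closedBall (z - ε • w) (g u₁ + ε * φ u₁) ⊆ B := by
    refine (closedBall_subset_iff_forall_inner_add_le_supportFun hconv hB hne _
      (h.1.trans hr'.le)).mpr fun u hu => ?_
    have := isMinOn_iff.mp hmin u hu
    simp only [g, inner_sub_right, real_inner_smul_right, hw] at this ⊢
    linarith
  exact (h.2.2 _ _ (h.1.trans hr'.le) hball).not_gt hr'

end LargestBall

open Module in
lemma exists_mem_sub_inner_le_of_mem_convexHull {E : Type*} [NormedAddCommGroup E]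
    [InnerProductSpace ℝ E] [FiniteDimensional ℝ E] {D : Set E} {y : E}
    (hy : y ∈ convexHull ℝ D) (r : ℝ) :
    ∃ u ∈ D, ∀ x, (∀ v ∈ D, ⟪v, x⟫ ≤ r) →
      r - ⟪u, x⟫ ≤ (finrank ℝ E + 1) * (r - ⟪y, x⟫) := by
  obtain ⟨ι, _, p, w, hpD, hind, hw0, hw1, hwy⟩ := eq_pos_convex_span_of_mem_convexHull hy
  have : Nonempty ι := by
    by_contra hι
    simp [not_nonempty_iff.mp hι] at hw1
  -- Carathéodory: at most `finrank + 1` points, so the heaviest weight is `≥ 1 / (finrank + 1)`.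
  obtain ⟨i₀, hi₀⟩ := Finite.exists_max w
  have hcard : (Fintype.card ι : ℝ) ≤ finrank ℝ E + 1 := by
    exact_mod_cast hind.card_le_finrank_succ.trans (by gcongr; exact Submodule.finrank_le _)
  have hw₀ : 1 ≤ (finrank ℝ E + 1) * w i₀ :=
    calc 1 = ∑ i, w i := hw1.symm
      _ ≤ ∑ _i, w i₀ := Finset.sum_le_sum fun i _ => hi₀ i
      _ = Fintype.card ι * w i₀ := by simp
      _ ≤ (finrank ℝ E + 1) * w i₀ := by gcongr; exact (hw0 i₀).le
  refine ⟨p i₀, hpD ⟨i₀, rfl⟩, fun x hx => ?_⟩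
  have hterm : ∀ i, 0 ≤ w i * (r - ⟪p i, x⟫) := fun i =>
    mul_nonneg (hw0 i).le (sub_nonneg.mpr (hx _ (hpD ⟨i, rfl⟩)))
  have hsum : ∑ i, w i * (r - ⟪p i, x⟫) = r - ⟪y, x⟫ := by
    simp only [← hwy, sum_inner, real_inner_smul_left, mul_sub, Finset.sum_sub_distrib,
      ← Finset.sum_mul, hw1, one_mul]
  calc r - ⟪p i₀, x⟫ ≤ (finrank ℝ E + 1) * w i₀ * (r - ⟪p i₀, x⟫) :=
        le_mul_of_one_le_left (sub_nonneg.mpr (hx _ (hpD ⟨i₀, rfl⟩))) hw₀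
    _ = (finrank ℝ E + 1) * (w i₀ * (r - ⟪p i₀, x⟫)) := mul_assoc _ _ _
    _ ≤ (finrank ℝ E + 1) * (r - ⟪y, x⟫) := by
      rw [← hsum]; gcongr; exact Finset.single_le_sum (fun i _ => hterm i) (Finset.mem_univ i₀)

lemma heightOf_le_of_slab {d : ℕ} {B : Set (Euc d)} {u : Euc d} (hu : ‖u‖ = 1) {a h : ℝ}
    (hh : 0 ≤ h) (hB : ∀ x ∈ B, a ≤ ⟪u, x⟫ ∧ ⟪u, x⟫ ≤ a + h) :
    heightOf B ≤ h :=
  csInf_le ⟨0, fun _ hh => hh.1⟩ ⟨hh, u, hu, a, hB⟩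

lemma IsLargestBallIn.heightOf_le {d : ℕ} (hd : 0 < d) {B : Set (Euc d)} (hconv : Convex ℝ B)
    (hB : IsCompact B) (hne : B.Nonempty) {z : Euc d} {r : ℝ} (h : IsLargestBallIn B z r) :
    heightOf B ≤ (d + 1) * r := by
  have : NeZero d := ⟨hd.ne'⟩
  set D := contactNormals B z r
  have hz : z ∈ B := h.2.1 (mem_closedBall_self h.1)
  have hDB : ∀ u ∈ D, ∀ x ∈ B, ⟪u, x - z⟫ ≤ r := fun u hu x hx => by
    have := inner_le_supportFun hB u hx
    rw [inner_sub_right]; linarith [hu.2]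
  have hslab : ∀ y ∈ convexHull ℝ D, heightOf B ≤ (d + 1) * (r + ‖y‖ * diam B) := by
    intro y hy
    obtain ⟨u, huD, hu⟩ := exists_mem_sub_inner_le_of_mem_convexHull hy r
    rw [finrank_euclideanSpace_fin] at hu
    refine heightOf_le_of_slab (mem_sphere_zero_iff_norm.mp huD.1)
      (a := ⟪u, z⟫ + r - (d + 1) * (r + ‖y‖ * diam B)) (by have := h.1; positivity)
      fun x hx => ?_
    have hux := hu (x - z) fun v hv => hDB v hv x hx
    have hyx : -⟪y, x - z⟫ ≤ ‖y‖ * diam B :=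
      (neg_le_abs _).trans ((abs_real_inner_le_norm _ _).trans (by
        gcongr; rw [← dist_eq_norm]; exact dist_le_diam_of_mem hB.isBounded hx hz))
    have hux' := hDB u huD x hx
    rw [inner_sub_right] at hux hux'
    constructor <;> nlinarith
  have hclosed : IsClosed {y : Euc d | heightOf B ≤ (d + 1) * (r + ‖y‖ * diam B)} :=
    isClosed_le continuous_const (by fun_prop)
  have h0 : (0 : Euc d) ∈ {y : Euc d | heightOf B ≤ (d + 1) * (r + ‖y‖ * diam B)} :=
    closure_minimal hslab hclosed (h.zero_mem_closure_convexHull hconv hB hne)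
  simpa using h0

theorem stmt4 (d : ℕ) (hd : 0 < d) (B : Set (Euc d)) (hB : Convex ℝ B)
    (hshape : IsShape B) :
    ∃ z : Euc d, Metric.closedBall z (heightOf B / (2 * d)) ⊆ B := by
  obtain ⟨hcompact, hspan⟩ := hshape
  have hne : B.Nonempty :=
    (affineSpan_nonempty ℝ).mp (by rw [hspan, AffineSubspace.top_coe]; exact univ_nonempty)
  have : NeZero d := ⟨hd.ne'⟩
  obtain ⟨z, r, h⟩ := hcompact.exists_isLargestBallIn hB hne
  have hheight := h.heightOf_le hd hB hcompact hne
  refine ⟨z, (closedBall_subset_closedBall ?_).trans h.2.1⟩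
  have hd1 : (1 : ℝ) ≤ d := by exact_mod_cast hd
  rw [div_le_iff₀ (by positivity)]
  nlinarith [h.1]
end
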